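/- In minimal propositional logic extended by the axiom scheme A → T(A), if S' is a proposition with S' ↔ ¬T(S') derivable, then both ¬S' and ¬¬T(S') are derivable. -/
import Mathlib


/-- Propositional formulas built from variables and ⊥ using ∧, ∨, →. -/
inductive Fm : Type
  | var : ℕ → Fm
  | bot : Fm
  | and : Fm → Fm → Fm
  | or : Fm → Fm → Fm
  | imp : Fm → Fm → Fm
deriving DecidableEq

/-- ¬A is defined as A → ⊥. -/
def Fm.neg (A : Fm) : Fm := A.imp .bot

/-- Hilbert-style derivability in minimal propositional logic (intuitionistic
logic without ex falso quodlibet), extended by an extra set `Ax` of axioms. -/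
inductive Deriv (Ax : Fm → Prop) : Fm → Prop
  | ax {A} : Ax A → Deriv Ax A
  | k (A B : Fm) : Deriv Ax (A.imp (B.imp A))
  | s (A B C : Fm) : Deriv Ax ((A.imp (B.imp C)).imp ((A.imp B).imp (A.imp C)))
  | andI (A B : Fm) : Deriv Ax (A.imp (B.imp (A.and B)))
  | andE1 (A B : Fm) : Deriv Ax ((A.and B).imp A)
  | andE2 (A B : Fm) : Deriv Ax ((A.and B).imp B)
  | orI1 (A B : Fm) : Deriv Ax (A.imp (A.or B))
  | orI2 (A B : Fm) : Deriv Ax (B.imp (A.or B))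
  | orE (A B C : Fm) : Deriv Ax ((A.imp C).imp ((B.imp C).imp ((A.or B).imp C)))
  | mp {A B : Fm} : Deriv Ax (A.imp B) → Deriv Ax A → Deriv Ax B

/-- with the scheme A → T(A), if S' ↔ ¬T(S') is derivable
then ¬S' and ¬¬T(S') are derivable. -/
theorem stmt2 (T : Fm → Fm) (Ax : Fm → Prop)
    (hT1 : ∀ A : Fm, Deriv Ax (A.imp (T A)))
    (S' : Fm)
    (hS1 : Deriv Ax (S'.imp (T S').neg))
    (hS2 : Deriv Ax ((T S').neg.imp S')) :
    Deriv Ax S'.neg ∧ Deriv Ax (T S').neg.neg := by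
  have negS : Deriv Ax S'.neg :=
    Deriv.mp (Deriv.mp (Deriv.s S' (T S') Fm.bot) hS1) (hT1 S')
  refine ⟨negS, ?_⟩
  exact Deriv.mp (Deriv.mp (Deriv.s (T S').neg S' Fm.bot)
    (Deriv.mp (Deriv.k S'.neg (T S').neg) negS)) hS2
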